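/- Let M be a finitely generated projective B-module with compatible G-action. Suppose that for every field k, every ring homomorphism φ : B → k, and every g ∈ G stabilizing φ, the element g acts trivially on the fiber M ⊗_{B,φ} k. Then the counit map B ⊗_A M^G → M, b ⊗ m ↦ b • m, is bijective and M^G is a finitely generated projective A-module. -/

import Mathlib

open TensorProduct

/-- The subring of `G`-invariant elements of `B`. -/
def fixedSubring (G B : Type*) [Group G] [CommRing B] [MulSemiringAction G B] : Subring B where
  carrier := {b | ∀ g : G, g • b = b}
  mul_mem' := by intro a b ha hb g; rw [smul_mul', ha, hb]
  one_mem' := fun g => smul_one g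
  add_mem' := by intro a b ha hb g; rw [smul_add, ha, hb]
  zero_mem' := fun g => smul_zero g
  neg_mem' := by intro a ha g; rw [smul_neg, ha]

/-- A `B`-module `M` with a compatible `G`-action: `G` acts on `M` by additive
automorphisms and `g • (b • m) = (g • b) • (g • m)`. -/
class CompatibleAction (G B M : Type*) [Group G] [CommRing B] [MulSemiringAction G B]
    [AddCommGroup M] [Module B M] extends DistribMulAction G M where
  smul_smul_comm : ∀ (g : G) (b : B) (m : M), g • (b • m) = (g • b) • (g • m)

/-- The invariants `M^G`, as a module over the invariant subring `A = B^G`. -/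
def invariantSubmodule (G B M : Type*) [Group G] [CommRing B] [MulSemiringAction G B]
    [AddCommGroup M] [Module B M] [CompatibleAction G B M] :
    Submodule (fixedSubring G B) M where
  carrier := {m | ∀ g : G, g • m = m}
  add_mem' := by intro m m' hm hm' g; rw [smul_add, hm g, hm' g]
  zero_mem' := fun g => smul_zero g
  smul_mem' := by
    intro a m hm g
    rw [Subring.smul_def, CompatibleAction.smul_smul_comm g (a : B) m, hm g, a.2 g]

/-- The counit map `ε : B ⊗_A M^G → M`, `b ⊗ m ↦ b • m`. -/
noncomputable def counitMap (G B M : Type*) [Group G] [CommRing B] [MulSemiringAction G B]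
    [AddCommGroup M] [Module B M] [CompatibleAction G B M] :
    B ⊗[fixedSubring G B] (invariantSubmodule G B M) →ₗ[fixedSubring G B] M :=
  TensorProduct.lift
    { toFun := fun b =>
        ((LinearMap.lsmul B M b).restrictScalars (fixedSubring G B)) ∘ₗ
          (invariantSubmodule G B M).subtype
      map_add' := fun b b' => by ext m; simp [add_smul]
      map_smul' := fun a b => by ext m; simp [Subring.smul_def, mul_smul] }

/-!
The Reynolds operator `⅟|G| • ∑ g` turns any section of an equivariant surjection onto the
projective module `M` into an equivariant one. So as soon as `M` is generated by invariants, it is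
an equivariant retract of a free module `B^n` with its coordinatewise action; taking invariants
and base change along `A → B` both preserve retracts, and for `B^n` both claims are clear since
`(B^n)^G = A^n`.

The invariants do generate `M`: otherwise some nonzero `B`-linear `f : M → B/𝔪` kills `M^G`, hence
kills every `∑ g, g • (b • m)`. Writing `φ : B → B/𝔪`, this says that the characters
`b ↦ φ (g • b)` satisfy `∑ g, f (g • m) φ (g • b) = 0`, and Dedekind's independence of characters
isolates the coefficients of the `g` stabilizing `φ`, where `f (g • m) = f m` by the fiber
hypothesis. Hence `|Stab φ| • f m = 0`, and `|Stab φ|` divides `|G|`, a unit in `B/𝔪`.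
-/

theorem Submodule.exists_finset_subset_span_eq_top {R M : Type*} [Semiring R] [AddCommMonoid M]
    [Module R M] [Module.Finite R M] {s : Set M} (hs : span R s = ⊤) :
    ∃ t : Finset M, ↑t ⊆ s ∧ span R (t : Set M) = ⊤ := by
  obtain ⟨t, hts, heq⟩ := (fg_span_iff_fg_span_finset_subset s).1 (hs ▸ Module.Finite.fg_top)
  exact ⟨t, hts, heq ▸ hs⟩

theorem Submodule.exists_isMaximal_linearMap_ne_zero_of_ne_top {R M : Type*} [CommRing R]
    [AddCommGroup M] [Module R M] [Module.Finite R M] {N : Submodule R M} (hN : N ≠ ⊤) :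
    ∃ (𝔪 : Ideal R) (_ : 𝔪.IsMaximal) (f : M →ₗ[R] R ⧸ 𝔪), f ≠ 0 ∧ N ≤ LinearMap.ker f := by
  obtain ⟨W, hW, hNW⟩ := (IsCoatomic.eq_top_or_exists_le_coatom N).resolve_left hN
  have : IsSimpleModule R (M ⧸ W) := isSimpleModule_iff_isCoatom.2 hW
  obtain ⟨𝔪, h𝔪, ⟨e⟩⟩ := isSimpleModule_iff_quot_maximal.1 this
  obtain ⟨m, hm⟩ := SetLike.exists_not_mem_of_ne_top W hW.1 rfl
  refine ⟨𝔪, h𝔪, e.toLinearMap ∘ₗ W.mkQ, fun h => hm ?_, fun x hx => ?_⟩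
  · simpa using LinearMap.congr_fun h m
  · simpa using hNW hx

theorem LinearMap.eq_of_tmul_one_eq_tmul_one {R M k : Type*} [CommRing R] [AddCommGroup M]
    [Module R M] [CommRing k] [Algebra R k] (f : M →ₗ[R] k) {x y : M}
    (h : x ⊗ₜ[R] (1 : k) = y ⊗ₜ[R] (1 : k)) : f x = f y := by
  simpa using congrArg (LinearMap.mul' R k ∘ₗ f.rTensor k) h

open Classical in
theorem sum_filter_eq_zero_of_forall_sum_mul_monoidHom_eq_zero {ι R k : Type*} [Fintype ι]
    [MulOneClass R] [CommRing k] [IsDomain k] (χ : ι → R →* k) (c : ι → k)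
    (h : ∀ r, ∑ i, c i * χ i r = 0)
    (ψ : R →* k) : ∑ i with χ i = ψ, c i = 0 := by
  set S := insert ψ (Finset.univ.image χ)
  have hcomb : ∑ ψ' ∈ S, (∑ i with χ i = ψ', c i) • (ψ' : R → k) = 0 := by
    funext r
    simp only [Finset.sum_apply, Pi.smul_apply, smul_eq_mul, Finset.sum_mul, Pi.zero_apply]
    rw [← h r, ← Finset.sum_fiberwise_of_maps_to (g := χ) (t := S) fun i _ =>
      Finset.mem_insert_of_mem (Finset.mem_image_of_mem χ (Finset.mem_univ i))]
    refine Finset.sum_congr rfl fun ψ' _ => Finset.sum_congr rfl fun i hi => ?_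
    rw [(Finset.mem_filter.1 hi).2]
  exact linearIndependent_iff'.1 (linearIndependent_monoidHom R k) S _ hcomb ψ
    (Finset.mem_insert_self ψ _)

section Invariants

variable (G : Type*) {B M N : Type*} [Group G] [CommRing B] [MulSemiringAction G B]
  [AddCommGroup M] [Module B M] [CompatibleAction G B M]
  [AddCommGroup N] [Module B N] [CompatibleAction G B N]

def IsEquivariant (f : N →ₗ[B] M) : Prop :=
  ∀ (g : G) (x : N), f (g • x) = g • f x

variable {G}

theorem isEquivariant_id : IsEquivariant G (LinearMap.id : M →ₗ[B] M) := fun _ _ => rfl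

theorem sum_smul_mem_invariantSubmodule [Fintype G] (x : M) :
    ∑ g : G, g • x ∈ invariantSubmodule G B M := fun h => by
  rw [Finset.smul_sum]
  exact Fintype.sum_equiv (Equiv.mulLeft h) _ _ fun g => (mul_smul h g x).symm

def restrictInvariants (f : N →ₗ[B] M) (hf : IsEquivariant G f) :
    invariantSubmodule G B N →ₗ[fixedSubring G B] invariantSubmodule G B M :=
  ((f.restrictScalars (fixedSubring G B)).comp (invariantSubmodule G B N).subtype).codRestrict _
    fun x g => (hf g x).symm.trans (congrArg f (x.2 g))

@[simp]
theorem coe_restrictInvariants_apply (f : N →ₗ[B] M) (hf : IsEquivariant G f)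
    (x : invariantSubmodule G B N) : (restrictInvariants f hf x : M) = f x :=
  rfl

theorem restrictInvariants_comp_eq_id {θ : N →ₗ[B] M} {σ : M →ₗ[B] N} (hθ : IsEquivariant G θ)
    (hσ : IsEquivariant G σ) (hθσ : θ ∘ₗ σ = LinearMap.id) :
    restrictInvariants θ hθ ∘ₗ restrictInvariants σ hσ = LinearMap.id :=
  LinearMap.ext fun x => Subtype.ext (LinearMap.congr_fun hθσ x)

theorem counitMap_comp_lTensor_restrictInvariants (f : N →ₗ[B] M) (hf : IsEquivariant G f) :
    counitMap G B M ∘ₗ (restrictInvariants f hf).lTensor B =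
      f.restrictScalars (fixedSubring G B) ∘ₗ counitMap G B N :=
  TensorProduct.ext' fun b x => by simp [counitMap]

theorem counitMap_bijective_of_retract {θ : N →ₗ[B] M} {σ : M →ₗ[B] N} (hθ : IsEquivariant G θ)
    (hσ : IsEquivariant G σ) (hθσ : θ ∘ₗ σ = LinearMap.id)
    (hN : Function.Bijective (counitMap G B N)) : Function.Bijective (counitMap G B M) := by
  have hθ' := counitMap_comp_lTensor_restrictInvariants θ hθ
  have hσ' := counitMap_comp_lTensor_restrictInvariants σ hσ
  have hret : (restrictInvariants θ hθ).lTensor B ∘ₗ (restrictInvariants σ hσ).lTensor B =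
      LinearMap.id := by
    rw [← LinearMap.lTensor_comp, restrictInvariants_comp_eq_id hθ hσ hθσ, LinearMap.lTensor_id]
  constructor
  · refine Function.Injective.of_comp (f := σ) ?_
    rw [← LinearMap.coe_restrictScalars (fixedSubring G B), ← LinearMap.coe_comp, ← hσ']
    exact hN.1.comp (Function.LeftInverse.injective (g := (restrictInvariants θ hθ).lTensor B)
      (LinearMap.congr_fun hret))
  · refine Function.Surjective.of_comp (g := (restrictInvariants θ hθ).lTensor B) ?_
    rw [← LinearMap.coe_comp, hθ', LinearMap.coe_comp, LinearMap.coe_restrictScalars]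
    exact (Function.RightInverse.surjective (f := θ) (LinearMap.congr_fun hθσ)).comp hN.2

end Invariants

section Pi

variable {G B : Type*} [Group G] [CommRing B] [MulSemiringAction G B] (ι : Type*)

instance Pi.compatibleAction : CompatibleAction G B (ι → B) where
  smul_smul_comm g b w := funext fun i => smul_mul' g b (w i)

def invariantSubmodulePiEquiv :
    invariantSubmodule G B (ι → B) ≃ₗ[fixedSubring G B] (ι → fixedSubring G B) where
  toFun w i := ⟨(w : ι → B) i, fun g => congrFun (w.2 g) i⟩
  invFun a := ⟨fun i => a i, fun g => funext fun i => (a i).2 g⟩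
  map_add' _ _ := rfl
  map_smul' _ _ := rfl
  left_inv _ := rfl
  right_inv _ := rfl

instance [Finite ι] : Module.Finite (fixedSubring G B) (invariantSubmodule G B (ι → B)) :=
  Module.Finite.equiv (invariantSubmodulePiEquiv ι).symm

instance [Finite ι] : Module.Projective (fixedSubring G B) (invariantSubmodule G B (ι → B)) :=
  Module.Projective.of_equiv (invariantSubmodulePiEquiv ι).symm

theorem counitMap_pi_bijective [Fintype ι] [DecidableEq ι] :
    Function.Bijective (counitMap G B (ι → B)) := by
  let e := (LinearEquiv.lTensor B (invariantSubmodulePiEquiv ι)).trans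
    (TensorProduct.piScalarRight (fixedSubring G B) (fixedSubring G B) B ι)
  have : ⇑(counitMap G B (ι → B)) = e := by
    refine congrArg DFunLike.coe (TensorProduct.ext' fun b w => funext fun i => ?_)
    simp [counitMap, e, invariantSubmodulePiEquiv, Subring.smul_def, mul_comm]
  exact this ▸ e.bijective

end Pi

section Averaging

variable (G : Type*) {B M N : Type*} [Group G] [Fintype G] [CommRing B] [MulSemiringAction G B]
  [Invertible (Fintype.card G : B)]
  [AddCommGroup M] [Module B M] [CompatibleAction G B M]
  [AddCommGroup N] [Module B N] [CompatibleAction G B N]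

theorem smul_invOf_card (g : G) : g • ⅟(Fintype.card G : B) = ⅟(Fintype.card G : B) := by
  have hcard : g • (Fintype.card G : B) = Fintype.card G :=
    map_natCast (MulSemiringAction.toRingHom G B g) _
  refine (invOf_eq_right_inv ?_).symm
  calc (Fintype.card G : B) * g • ⅟(Fintype.card G : B)
      = g • ((Fintype.card G : B) * ⅟(Fintype.card G : B)) := by rw [smul_mul', hcard]
    _ = 1 := by rw [mul_invOf_self, smul_one]

noncomputable def averageLinearMap (f : M →ₗ[B] N) : M →ₗ[B] N where
  toFun m := ⅟(Fintype.card G : B) • ∑ g : G, g • f (g⁻¹ • m)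
  map_add' x y := by simp only [smul_add, map_add, Finset.sum_add_distrib]
  map_smul' b m := by
    have hg : ∀ g : G, g • f (g⁻¹ • (b • m)) = b • g • f (g⁻¹ • m) := fun g => by
      rw [CompatibleAction.smul_smul_comm, map_smul, CompatibleAction.smul_smul_comm,
        smul_inv_smul]
    simp only [hg, ← Finset.smul_sum, RingHom.id_apply]
    exact smul_comm _ _ _

variable {G}

theorem averageLinearMap_apply (f : M →ₗ[B] N) (m : M) :
    averageLinearMap G f m = ⅟(Fintype.card G : B) • ∑ g : G, g • f (g⁻¹ • m) :=
  rfl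

theorem isEquivariant_averageLinearMap (f : M →ₗ[B] N) :
    IsEquivariant G (averageLinearMap G f) := fun h m => by
  rw [averageLinearMap_apply, averageLinearMap_apply, CompatibleAction.smul_smul_comm,
    smul_invOf_card, Finset.smul_sum (r := h)]
  congr 1
  exact Fintype.sum_equiv (Equiv.mulLeft h⁻¹) _ _ fun g => by simp [mul_smul]

theorem averageLinearMap_eq_self {f : M →ₗ[B] N} (hf : IsEquivariant G f) :
    averageLinearMap G f = f := by
  ext m
  have hg : ∀ g : G, g • f (g⁻¹ • m) = f m := fun g => by rw [← hf, smul_inv_smul]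
  simp only [averageLinearMap_apply, hg, Finset.sum_const, Finset.card_univ,
    ← Nat.cast_smul_eq_nsmul B, smul_smul, invOf_mul_self, one_smul]

theorem comp_averageLinearMap {θ : N →ₗ[B] M} (hθ : IsEquivariant G θ) (f : M →ₗ[B] N) :
    θ ∘ₗ averageLinearMap G f = averageLinearMap G (θ ∘ₗ f) := by
  ext m
  simp only [LinearMap.comp_apply, averageLinearMap_apply, map_smul, map_sum, hθ _ _]

theorem exists_isEquivariant_comp_eq_id [Module.Projective B M] {θ : N →ₗ[B] M}
    (hθ : Function.Surjective θ) (hθG : IsEquivariant G θ) :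
    ∃ σ : M →ₗ[B] N, IsEquivariant G σ ∧ θ ∘ₗ σ = LinearMap.id := by
  obtain ⟨σ, hσ⟩ := Module.projective_lifting_property θ LinearMap.id hθ
  refine ⟨averageLinearMap G σ, isEquivariant_averageLinearMap σ, ?_⟩
  rw [comp_averageLinearMap hθG, hσ, averageLinearMap_eq_self isEquivariant_id]

end Averaging

section Generation

variable (G : Type*) {B M : Type*} [Group G] [CommRing B] [MulSemiringAction G B]
  [AddCommGroup M] [Module B M] [CompatibleAction G B M]

def ringHomStabilizer {k : Type*} [Semiring k] (φ : B →+* k) : Subgroup G where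
  carrier := {g | ∀ b, φ (g • b) = φ b}
  one_mem' b := by rw [one_smul]
  mul_mem' hx hy b := by rw [mul_smul, hx, hy]
  inv_mem' {x} hx b := by rw [← hx, smul_inv_smul]

variable {G}

theorem isEquivariant_linearCombination {ι : Type*} [Fintype ι] {v : ι → M}
    (hv : ∀ i, v i ∈ invariantSubmodule G B M) :
    IsEquivariant G (Fintype.linearCombination B v) := fun g w => by
  simp only [Fintype.linearCombination_apply, Finset.smul_sum, CompatibleAction.smul_smul_comm,
    hv _ g]
  rfl

theorem LinearMap.eq_zero_of_forall_invariantSubmodule_of_forall_ringHomStabilizer [Fintype G]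
    [Invertible (Fintype.card G : B)] {k : Type*} [CommRing k] [IsDomain k] [Algebra B k]
    (f : M →ₗ[B] k) (hinv : ∀ m ∈ invariantSubmodule G B M, f m = 0)
    (hstab : ∀ g ∈ ringHomStabilizer G (algebraMap B k), ∀ m, f (g • m) = f m) : f = 0 := by
  classical
  ext m
  let χ (g : G) : B →* k :=
    (algebraMap B k : B →* k).comp (MulSemiringAction.toRingHom G B g : B →* B)
  have hχ : ∀ g, χ g = χ 1 ↔ g ∈ ringHomStabilizer G (algebraMap B k) := fun g => by
    simp [χ, DFunLike.ext_iff, ringHomStabilizer]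
  have hrel : ∀ b, ∑ g, f (g • m) * χ g b = 0 := fun b => by
    rw [← hinv _ (sum_smul_mem_invariantSubmodule (b • m)), map_sum]
    refine Finset.sum_congr rfl fun g _ => ?_
    rw [CompatibleAction.smul_smul_comm g b m, map_smul f (g • b) (g • m), Algebra.smul_def,
      mul_comm]
    rfl
  have hfiber := sum_filter_eq_zero_of_forall_sum_mul_monoidHom_eq_zero χ _ hrel (χ 1)
  rw [Finset.sum_congr (Finset.filter_congr fun g _ => hχ g)
    fun g hg => hstab g (Finset.mem_filter.1 hg).2 m, Finset.sum_const, nsmul_eq_mul,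
    ← Fintype.card_subtype, ← Nat.card_eq_fintype_card] at hfiber
  have hG : (Nat.card G : k) ≠ 0 := by
    simpa using ((isUnit_of_invertible (Fintype.card G : B)).map (algebraMap B k)).ne_zero
  obtain ⟨d, hd⟩ := Subgroup.card_subgroup_dvd_card (ringHomStabilizer G (algebraMap B k))
  refine (mul_eq_zero.1 hfiber).resolve_left fun h0 => hG ?_
  rw [hd, Nat.cast_mul, h0, zero_mul]

theorem span_invariantSubmodule_eq_top [Fintype G] [Invertible (Fintype.card G : B)]
    [Module.Finite B M]
    (htriv : ∀ (𝔪 : Ideal B) [𝔪.IsMaximal], ∀ g ∈ ringHomStabilizer G (Ideal.Quotient.mk 𝔪),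
      ∀ m : M, (g • m) ⊗ₜ[B] (1 : B ⧸ 𝔪) = m ⊗ₜ[B] (1 : B ⧸ 𝔪)) :
    Submodule.span B (invariantSubmodule G B M : Set M) = ⊤ := by
  by_contra hne
  obtain ⟨𝔪, _, f, hf, hle⟩ := Submodule.exists_isMaximal_linearMap_ne_zero_of_ne_top hne
  exact hf (f.eq_zero_of_forall_invariantSubmodule_of_forall_ringHomStabilizer
    (fun m hm => hle (Submodule.subset_span hm))
    fun g hg m => f.eq_of_tmul_one_eq_tmul_one (htriv 𝔪 g hg m))

end Generation

/-- For a finitely generated projective `B`-module `M` with compatible `G`-action whose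
fibers at field-valued points are trivial representations of the stabilizers, the counit
`ε : B ⊗_A M^G → M` is bijective and `M^G` is a finitely generated projective module over
`A = B^G`. -/
theorem projective_descent_of_trivial_fiber_actions
    {G : Type*} {B : Type u} {M : Type*} [Group G] [Fintype G] [CommRing B]
    [MulSemiringAction G B] [AddCommGroup M] [Module B M] [CompatibleAction G B M]
    (hcard : Invertible (Fintype.card G : B))
    (hfg : Module.Finite B M) (hproj : Module.Projective B M)
    (htriv : ∀ (k : Type u) [Field k], ∀ (φ : B →+* k) (g : G),
      (∀ b : B, φ (g • b) = φ b) →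
      ∀ m : M,
        haveI : Algebra B k := φ.toAlgebra
        (g • m) ⊗ₜ[B] (1 : k) = m ⊗ₜ[B] (1 : k)) :
    Function.Bijective (counitMap G B M) ∧
    Module.Finite (fixedSubring G B) (invariantSubmodule G B M) ∧
    Module.Projective (fixedSubring G B) (invariantSubmodule G B M) := by
  classical
  have hspan := span_invariantSubmodule_eq_top fun 𝔪 _ g hg m =>
    @htriv (B ⧸ 𝔪) (Ideal.Quotient.field 𝔪) (Ideal.Quotient.mk 𝔪) g hg m
  obtain ⟨T, hTinv, hTspan⟩ := Submodule.exists_finset_subset_span_eq_top hspan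
  let θ := Fintype.linearCombination B ((↑) : T → M)
  have hθ : IsEquivariant G θ := isEquivariant_linearCombination fun i => hTinv i.2
  have hθsurj : Function.Surjective θ :=
    (span_range_eq_top_iff_surjective_fintypeLinearCombination B _).1 (by simpa using hTspan)
  obtain ⟨σ, hσ, hθσ⟩ := exists_isEquivariant_comp_eq_id hθsurj hθ
  have hret := restrictInvariants_comp_eq_id hθ hσ hθσ
  exact ⟨counitMap_bijective_of_retract hθ hσ hθσ (counitMap_pi_bijective T),
    Module.Finite.of_surjective (restrictInvariants θ hθ)
      (Function.RightInverse.surjective (LinearMap.congr_fun hret)),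
    Module.Projective.of_split _ _ hret⟩
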